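/- arXiv:2309.13691 — 3 statements merged into one kernel-verified Lean document; each statement's English description precedes it below -/
import Mathlib

section
/- For the binary symmetric channel with crossover probability p ≤ 1/2 and output energies b(0)=0, b(1)=1, the capacity-power function is C(B) = log 2 - h(p) for 0 ≤ B ≤ 1/2, and C(B) = h(B) - h(p) for 1/2 ≤ B ≤ 1 - p. That is, the maximum of I(X;Y) = h(q*(1-p)+(1-q)*p) - h(p) over input distributions q = P(X=1) with output mean energy q(1-p)+(1-q)p ≥ B equals h(max(B,1/2)) - h(p). -/
noncomputable section

/-- Binary entropy function (natural logarithm), with convention `0 * log 0 = 0`. -/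
def binEnt (p : ℝ) : ℝ := -(p * Real.log p) - (1 - p) * Real.log (1 - p)

lemma binEnt_eq (x : ℝ) : binEnt x = Real.binEntropy x := by
  simp [binEnt, Real.binEntropy, Real.log_inv]; ring

lemma binEnt_half : binEnt (1 / 2) = Real.log 2 := by
  rw [binEnt_eq, show (1:ℝ)/2 = 2⁻¹ by norm_num, Real.binEntropy_two_inv]

/-- Capacity-power function of the binary symmetric channel with crossover
probability `p ≤ 1/2` and output energies b(0)=0, b(1)=1: the maximum of
`I(X;Y) = h(q(1-p)+(1-q)p) - h(p)` over input distributions `q = P(X=1)` with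
output mean energy `q(1-p)+(1-q)p ≥ B` equals `h(max(B,1/2)) - h(p)`; in
particular it is `log 2 - h(p)` for `0 ≤ B ≤ 1/2` and `h(B) - h(p)` for
`1/2 ≤ B ≤ 1 - p`. -/
theorem bsc_capacity_power (p B : ℝ) (hp0 : 0 ≤ p) (hp : p ≤ 1 / 2)
    (hB0 : 0 ≤ B) (hB : B ≤ 1 - p) :
    IsGreatest {c : ℝ | ∃ q : ℝ, 0 ≤ q ∧ q ≤ 1 ∧
        B ≤ q * (1 - p) + (1 - q) * p ∧
        c = binEnt (q * (1 - p) + (1 - q) * p) - binEnt p}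
      (binEnt (max B (1 / 2)) - binEnt p) ∧
    (B ≤ 1 / 2 → binEnt (max B (1 / 2)) - binEnt p = Real.log 2 - binEnt p) ∧
    (1 / 2 ≤ B → binEnt (max B (1 / 2)) - binEnt p = binEnt B - binEnt p) := by
  set M := max B (1 / 2) with hM
  have hM_half : (1:ℝ)/2 ≤ M := le_max_right _ _
  have hM_le : M ≤ 1 - p := max_le hB (by linarith)
  have hBM : B ≤ M := le_max_left _ _
  refine ⟨⟨?_, ?_⟩, ?_, ?_⟩
  · -- membership
    by_cases hphalf : p = 1 / 2
    · refine ⟨0, le_refl _, zero_le_one, ?_, ?_⟩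
      · subst hphalf; linarith
      · have : M = 1/2 := le_antisymm (by linarith) hM_half
        rw [this]; subst hphalf; norm_num
    · have hlt : p < 1/2 := lt_of_le_of_ne hp hphalf
      refine ⟨(M - p) / (1 - 2*p), ?_, ?_, ?_, ?_⟩
      · apply div_nonneg <;> linarith
      · rw [div_le_one (by linarith)]; linarith
      · have : (M - p) / (1 - 2*p) * (1 - p) + (1 - (M - p) / (1 - 2*p)) * p = M := by
          have h0 : (1 - 2*p) ≠ 0 := ne_of_gt (by linarith)
          rw [div_mul_eq_mul_div, one_sub_div h0, div_mul_eq_mul_div, ← add_div, div_eq_iff h0]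
          ring
        rw [this]; exact hBM
      · have : (M - p) / (1 - 2*p) * (1 - p) + (1 - (M - p) / (1 - 2*p)) * p = M := by
          have h0 : (1 - 2*p) ≠ 0 := ne_of_gt (by linarith)
          rw [div_mul_eq_mul_div, one_sub_div h0, div_mul_eq_mul_div, ← add_div, div_eq_iff h0]
          ring
        rw [this]
  · -- upper bound
    rintro c ⟨q, hq0, hq1, hBy, rfl⟩
    set y := q * (1 - p) + (1 - q) * p with hy
    have hy_le : y ≤ 1 - p := by nlinarith
    have hy_half_case : binEnt y ≤ binEnt M := by
      rcases le_or_gt B (1/2) with h | h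
      · have : M = 1/2 := max_eq_right h
        rw [this, binEnt_half, binEnt_eq]
        exact Real.binEntropy_le_log_two
      · have hMB : M = B := max_eq_left h.le
        rw [hMB, binEnt_eq, binEnt_eq]
        have hmem1 : B ∈ Set.Icc (2⁻¹:ℝ) 1 := ⟨by norm_num; linarith, by linarith⟩
        have hmem2 : y ∈ Set.Icc (2⁻¹:ℝ) 1 := ⟨by norm_num; linarith, by linarith⟩
        exact Real.binEntropy_strictAntiOn.antitoneOn hmem1 hmem2 hBy
    linarith
  · intro h
    have : M = 1/2 := max_eq_right h
    rw [this, binEnt_half]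
  · intro h
    have : M = B := max_eq_left h
    rw [this]
end
end

section
/- For the generalized exponential ensemble where each p_n has density ρ(p_n) = (ν + μ b_n) exp(-(ν+μb_n)p_n) on [0,∞), subject to ∑_n 1/(ν+μb_n) = 1, the expected value of -∑_n p_n log p_n equals H̃ - (1-γ), where H̃ = -∑_n P_n log P_n is the Shannon entropy of the probability distribution P_n = 1/(ν + μ b_n). -/
open MeasureTheory Real BigOperators Set Filter Asymptotics
open scoped Topology
noncomputable section

lemma genexp_mellin_conv :
    MellinConvergent (fun t : ℝ ↦ Real.log t • (Real.exp (-t) : ℂ)) 2 := by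
  refine (mellin_hasDerivAt_of_isBigO_rpow (E := ℂ) (s := 2) ?_ ?_ (lt_add_one _) ?_
    (by norm_num : (0:ℝ) < (2:ℂ).re)).1
  · refine (Continuous.continuousOn ?_).locallyIntegrableOn measurableSet_Ioi
    exact Complex.continuous_ofReal.comp (Real.continuous_exp.comp continuous_neg)
  · rw [← isBigO_norm_left]
    simp_rw [Complex.norm_real, isBigO_norm_left]
    simpa only [neg_one_mul] using (isLittleO_exp_neg_mul_rpow_atTop zero_lt_one _).isBigO
  · simp_rw [neg_zero, Real.rpow_zero]
    refine isBigO_const_of_tendsto (?_ : Tendsto _ _ (𝓝 (1 : ℂ))) one_ne_zero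
    rw [(by simp : (1 : ℂ) = ((Real.exp (-0) : ℝ) : ℂ))]
    exact (Complex.continuous_ofReal.comp
      (Real.continuous_exp.comp continuous_neg)).continuousWithinAt

lemma genexp_integrable_tlog_aux :
    IntegrableOn (fun t : ℝ ↦ ((t * Real.exp (-t) * Real.log t : ℝ) : ℂ)) (Ioi 0) := by
  have h : IntegrableOn (fun t : ℝ ↦ (t : ℂ) ^ ((2:ℂ) - 1) •
      (Real.log t • (Real.exp (-t) : ℂ))) (Ioi 0) := genexp_mellin_conv
  refine h.congr_fun (fun t ht ↦ ?_) measurableSet_Ioi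
  rw [show (2:ℂ) - 1 = 1 by ring]
  beta_reduce
  rw [Complex.cpow_one, Complex.real_smul, smul_eq_mul]
  push_cast
  ring

lemma genexp_integrable_tlog :
    IntegrableOn (fun t : ℝ ↦ t * Real.exp (-t) * Real.log t) (Ioi 0) := by
  have h3 := genexp_integrable_tlog_aux.re
  refine (IntegrableOn.congr_fun h3 (fun t ht ↦ ?_) measurableSet_Ioi : _)
  exact Complex.ofReal_re _

lemma genexp_integral_tlog :
    ∫ t in Ioi (0:ℝ), t * Real.exp (-t) * Real.log t = 1 - Real.eulerMascheroniConstant := by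
  have h1 := Complex.hasDerivAt_GammaIntegral (s := 2) (by norm_num)
  have heq : Complex.GammaIntegral =ᶠ[𝓝 (2:ℂ)] Complex.Gamma := by
    filter_upwards [(isOpen_lt continuous_const Complex.continuous_re).mem_nhds
      (by norm_num : (0:ℝ) < (2:ℂ).re)] with s hs
    exact (Complex.Gamma_eq_integral hs).symm
  have h3 := Complex.hasDerivAt_Gamma_nat 1
  have h2 : HasDerivAt Complex.GammaIntegral
      (((1 - Real.eulerMascheroniConstant : ℝ)) : ℂ) 2 := by
    have hpt : ((1:ℕ):ℂ) + 1 = 2 := by norm_num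
    rw [hpt] at h3
    refine (h3.congr_of_eventuallyEq heq).congr_deriv ?_
    rw [show harmonic 1 = 1 by norm_num [harmonic_succ]]
    push_cast
    norm_num
    ring
  have h4 := h1.unique h2
  have h5 : ∫ t in Ioi (0:ℝ), (t:ℂ) ^ ((2:ℂ) - 1) * (Real.log t * Real.exp (-t))
      = ∫ t in Ioi (0:ℝ), ((t * Real.exp (-t) * Real.log t : ℝ) : ℂ) := by
    refine setIntegral_congr_fun measurableSet_Ioi (fun t ht ↦ ?_)
    rw [show (2:ℂ) - 1 = 1 by ring, Complex.cpow_one]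
    push_cast
    ring
  have h6 : ∫ t in Ioi (0:ℝ), ((t * Real.exp (-t) * Real.log t : ℝ) : ℂ)
      = ((∫ t in Ioi (0:ℝ), t * Real.exp (-t) * Real.log t : ℝ) : ℂ) := integral_ofReal
  rw [h5, h6] at h4
  exact_mod_cast h4

lemma genexp_texp_integrable : IntegrableOn (fun t : ℝ ↦ t * Real.exp (-t)) (Ioi 0) := by
  have := Real.GammaIntegral_convergent (by norm_num : (0:ℝ) < 2)
  refine this.congr_fun (fun t ht ↦ ?_) measurableSet_Ioi
  rw [show (2:ℝ) - 1 = 1 by norm_num]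
  beta_reduce
  rw [Real.rpow_one]
  ring

lemma genexp_texp_integral : ∫ t in Ioi (0:ℝ), t * Real.exp (-t) = 1 := by
  have h := Real.Gamma_eq_integral (by norm_num : (0:ℝ) < 2)
  have h2 : Real.Gamma 2 = 1 := by
    rw [show (2:ℝ) = (1:ℕ) + 1 by norm_num, Real.Gamma_nat_eq_factorial]
    norm_num
  have h3 : ∫ t in Ioi (0:ℝ), t * Real.exp (-t)
      = ∫ x in Ioi (0:ℝ), Real.exp (-x) * x ^ ((2:ℝ) - 1) := by
    refine setIntegral_congr_fun measurableSet_Ioi (fun t ht ↦ ?_)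
    rw [show (2:ℝ) - 1 = 1 by norm_num, Real.rpow_one]
    ring
  rw [h3, ← h, h2]

lemma genexp_entropy_term {lam : ℝ} (hl : 0 < lam) :
    ∫ x in Ioi (0:ℝ), (-(x * Real.log x)) * (lam * Real.exp (-lam * x)) =
      (Real.log lam + Real.eulerMascheroniConstant - 1) / lam := by
  have hsub : ∫ x in Ioi (0:ℝ), (-(x * Real.log x)) * (lam * Real.exp (-lam * x))
      = lam⁻¹ • ∫ t in Ioi (0:ℝ),
          (-(t * Real.exp (-t) * Real.log t) + Real.log lam * (t * Real.exp (-t))) := by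
    have h := integral_comp_mul_left_Ioi
      (fun t ↦ (-(t * Real.exp (-t) * Real.log t) + Real.log lam * (t * Real.exp (-t))))
      0 hl
    rw [mul_zero] at h
    rw [← h]
    refine setIntegral_congr_fun measurableSet_Ioi (fun x hx ↦ ?_)
    have hx0 : (0:ℝ) < x := hx
    rw [Real.log_mul hl.ne' hx0.ne', neg_mul]
    ring
  have hi1 : IntegrableOn (fun t : ℝ ↦ -(t * Real.exp (-t) * Real.log t)) (Ioi 0) :=
    genexp_integrable_tlog.neg
  have hi2 : IntegrableOn (fun t : ℝ ↦ Real.log lam * (t * Real.exp (-t))) (Ioi 0) :=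
    genexp_texp_integrable.const_mul _
  rw [hsub, integral_add hi1 hi2, integral_neg, MeasureTheory.integral_const_mul,
    genexp_integral_tlog, genexp_texp_integral, smul_eq_mul]
  field_simp
  ring

/-- for the generalized exponential ensemble, with each `p_n` having
density `(ν + μ b_n) e^{-(ν+μb_n) p_n}` on `[0,∞)` and `∑_n 1/(ν+μb_n) = 1`, the
expected entropy `E[-∑_n p_n log p_n]` (computed termwise via the marginals)
equals `H̃ - (1 - γ)`, where `H̃` is the Shannon entropy of `P_n = 1/(ν+μb_n)`. -/
theorem generalized_exponential_entropy {ι : Type*} [Fintype ι]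
    (b : ι → ℝ) (ν μ : ℝ) (hb : ∀ n, 0 ≤ b n)
    (hpos : ∀ n, 0 < ν + μ * b n)
    (hnorm : ∑ n, 1 / (ν + μ * b n) = 1) :
    ∑ n, (∫ x in Set.Ioi (0 : ℝ),
        (-(x * Real.log x)) * ((ν + μ * b n) * Real.exp (-(ν + μ * b n) * x))) =
      (-∑ n, (1 / (ν + μ * b n)) * Real.log (1 / (ν + μ * b n)))
        - (1 - Real.eulerMascheroniConstant) := by

  have hL : ∀ n, (∫ x in Set.Ioi (0 : ℝ),
      (-(x * Real.log x)) * ((ν + μ * b n) * Real.exp (-(ν + μ * b n) * x)))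
      = (1 / (ν + μ * b n)) * Real.log (ν + μ * b n)
        + (Real.eulerMascheroniConstant - 1) * (1 / (ν + μ * b n)) := by
    intro n
    rw [genexp_entropy_term (hpos n)]
    have := (hpos n).ne'
    field_simp
    ring
  simp only [hL]
  rw [Finset.sum_add_distrib, ← Finset.mul_sum, hnorm]
  simp only [one_div, Real.log_inv, mul_neg, Finset.sum_neg_distrib, neg_neg]
  ring
end
end

section
/- For a complex Haar-random state (c_1,…,c_N) on the unit sphere in C^N, the expected Shannon entropy of the induced probability distribution (|c_1|²,…,|c_N|²) over measurement outcomes, computed via the spherical integral N · [-∫ cos²θ log(cos²θ) sin^{2N-3}θ cosθ dθ] / [∫ sin^{2N-3}θ cosθ dθ], equals H_N - 1, where H_N = 1 + 1/2 + ⋯ + 1/N is the N-th harmonic number. -/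
open MeasureTheory BigOperators
noncomputable section

lemma geom_aux (M : ℕ) (p : ℝ) :
    1 - (1 - p) ^ (M + 2) = p * ∑ k ∈ Finset.range (M + 2), (1 - p) ^ k := by
  have h := geom_sum_mul (1 - p) (M + 2)
  -- (∑ i in range n, x ^ i) * (x - 1) = x ^ n - 1
  nlinarith [h]

/-- the expected Shannon entropy of the outcome distribution of a
Haar-random complex state in `ℂ^N` equals `H_N - 1`, where `H_N` is the `N`-th
harmonic number: each squared amplitude `p₁` has marginal density
`(N-1)(1-p)^{N-2}` on `[0,1]`, and
`N ∫₀¹ -p log p · (N-1)(1-p)^{N-2} dp = H_N - 1`. -/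
theorem haar_random_state_mean_entropy (N : ℕ) (hN : 2 ≤ N) :
    (N : ℝ) * (∫ p in Set.Icc (0 : ℝ) 1,
        (-(p * Real.log p)) * ((N - 1 : ℝ) * (1 - p) ^ (N - 2))) =
      (∑ k ∈ Finset.range N, (1 : ℝ) / (k + 1)) - 1 := by
  obtain ⟨M, rfl⟩ : ∃ M, N = M + 2 := ⟨N - 2, by omega⟩
  set F : ℝ → ℝ := fun p =>
    p * Real.log p * (1 - p) ^ (M + 1)
      - Real.log p * ((1 - (1 - p) ^ (M + 2)) / (M + 2))
      - (1 / (M + 2)) * ∑ k ∈ Finset.range (M + 2), (1 - p) ^ (k + 1) / (k + 1)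
      - (1 - (1 - p) ^ (M + 2)) / (M + 2) with hF
  set f : ℝ → ℝ := fun p =>
    (-(p * Real.log p)) * (((M + 2 : ℕ) - 1 : ℝ) * (1 - p) ^ (M + 2 - 2)) with hf
  have hM2 : ((M : ℝ) + 2) ≠ 0 := by positivity
  have hFcont : Continuous F := by
    have hFeq : F = fun p =>
        p * Real.log p * (1 - p) ^ (M + 1)
          - (p * Real.log p) * ((∑ k ∈ Finset.range (M + 2), (1 - p) ^ k) / (M + 2))
          - (1 / (M + 2)) * ∑ k ∈ Finset.range (M + 2), (1 - p) ^ (k + 1) / (k + 1)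
          - (1 - (1 - p) ^ (M + 2)) / (M + 2) := by
      funext p
      rw [hF]
      simp only
      rw [geom_aux M p]
      ring
    rw [hFeq]
    have hml : Continuous fun p : ℝ => p * Real.log p := Real.continuous_mul_log
    apply Continuous.sub
    apply Continuous.sub
    apply Continuous.sub
    · exact hml.mul (by continuity)
    · exact hml.mul (by continuity)
    · exact continuous_const.mul (by continuity)
    · exact (by continuity : Continuous fun p : ℝ => (1 - (1 - p) ^ (M + 2)) / (M + 2))
  have hfcont : Continuous f := by
    rw [hf]
    exact (Real.continuous_mul_log.neg).mul (by continuity)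
  have hderiv : ∀ x ∈ Set.Ioo (0 : ℝ) 1, HasDerivAt F (f x) x := by
    intro x hx
    have hx0 : x ≠ 0 := ne_of_gt hx.1
    have h1p : HasDerivAt (fun p : ℝ => 1 - p) (-1) x := (hasDerivAt_id x).const_sub 1
    have hml : HasDerivAt (fun p : ℝ => p * Real.log p) (Real.log x + 1) x :=
      Real.hasDerivAt_mul_log hx0
    have hlog : HasDerivAt Real.log x⁻¹ x := Real.hasDerivAt_log hx0
    have hp1 : HasDerivAt (fun p : ℝ => (1 - p) ^ (M + 1))
        (((M + 1 : ℕ) : ℝ) * (1 - x) ^ (M + 1 - 1) * (-1)) x := h1p.pow (M + 1)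
    have hp2 : HasDerivAt (fun p : ℝ => (1 - p) ^ (M + 2))
        (((M + 2 : ℕ) : ℝ) * (1 - x) ^ (M + 2 - 1) * (-1)) x := h1p.pow (M + 2)
    have hV : HasDerivAt (fun p : ℝ => (1 - (1 - p) ^ (M + 2)) / (M + 2))
        ((-(((M + 2 : ℕ) : ℝ) * (1 - x) ^ (M + 2 - 1) * (-1))) / (M + 2)) x :=
      (hp2.const_sub 1).div_const _
    have hW : HasDerivAt (fun p : ℝ => ∑ k ∈ Finset.range (M + 2), (1 - p) ^ (k + 1) / (k + 1))
        (∑ k ∈ Finset.range (M + 2), (((k + 1 : ℕ) : ℝ) * (1 - x) ^ (k + 1 - 1) * (-1)) / (k + 1))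
        x := HasDerivAt.fun_sum fun k _ => (h1p.pow (k + 1)).div_const _
    have hD : HasDerivAt F
        ((Real.log x + 1) * (1 - x) ^ (M + 1)
            + (x * Real.log x) * (((M + 1 : ℕ) : ℝ) * (1 - x) ^ (M + 1 - 1) * (-1))
          - (x⁻¹ * ((1 - (1 - x) ^ (M + 2)) / (M + 2))
              + Real.log x * ((-(((M + 2 : ℕ) : ℝ) * (1 - x) ^ (M + 2 - 1) * (-1))) / (M + 2)))
          - (1 / (M + 2)) * (∑ k ∈ Finset.range (M + 2),
              (((k + 1 : ℕ) : ℝ) * (1 - x) ^ (k + 1 - 1) * (-1)) / (k + 1))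
          - (-(((M + 2 : ℕ) : ℝ) * (1 - x) ^ (M + 2 - 1) * (-1))) / (M + 2)) x := by
      exact (((hml.mul hp1).sub (hlog.mul hV)).sub (hW.const_mul _)).sub hV
    convert hD using 1
    have hsum : ∀ k ∈ Finset.range (M + 2),
        (((k + 1 : ℕ) : ℝ) * (1 - x) ^ (k + 1 - 1) * (-1)) / (k + 1) = -(1 - x) ^ k := by
      intro k _
      have : ((k : ℝ) + 1) ≠ 0 := by positivity
      push_cast
      field_simp
    rw [Finset.sum_congr rfl hsum]
    rw [geom_aux M x]
    simp only [Nat.add_sub_cancel, hf]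
    push_cast
    have hxinv : x⁻¹ * (x * ∑ k ∈ Finset.range (M + 2), (1 - x) ^ k)
        = ∑ k ∈ Finset.range (M + 2), (1 - x) ^ k := by
      field_simp
    rw [Finset.sum_neg_distrib]
    field_simp
    ring
  have hint : IntervalIntegrable f volume 0 1 := hfcont.intervalIntegrable 0 1
  have key : (∫ p in Set.Icc (0 : ℝ) 1, f p) = F 1 - F 0 := by
    rw [MeasureTheory.integral_Icc_eq_integral_Ioc,
      ← intervalIntegral.integral_of_le (by norm_num : (0 : ℝ) ≤ 1)]
    exact intervalIntegral.integral_eq_sub_of_hasDerivAt_of_le (by norm_num)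
      hFcont.continuousOn hderiv hint
  have hF1 : F 1 = -(1 / ((M : ℝ) + 2)) := by
    rw [hF]
    simp [Real.log_one, zero_pow, Nat.succ_ne_zero]
  have hF0 : F 0 = -(1 / ((M : ℝ) + 2)) * ∑ k ∈ Finset.range (M + 2), (1 : ℝ) / (k + 1) := by
    rw [hF]
    simp [Real.log_zero]
  calc ((M + 2 : ℕ) : ℝ) * (∫ p in Set.Icc (0 : ℝ) 1, f p)
      = ((M : ℝ) + 2) * (F 1 - F 0) := by rw [key]; push_cast; ring
    _ = (∑ k ∈ Finset.range (M + 2), (1 : ℝ) / (k + 1)) - 1 := by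
        rw [hF1, hF0]
        field_simp
        ring
end
end
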